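/- For every n ≥ 1 there exists a bijection θ from the set of noncrossing partitions of [n] onto the set of 321-avoiding permutations of [n] such that for every noncrossing partition π, the excedence set of θ(π) equals {m−1 : m is the minimum element of a block of π and m ≠ 1}; in particular the number of excedences of θ(π) is one less than the number of blocks of π. -/

import Mathlib

/-- A permutation `p` of `[n]` (0-based `Fin n`) is 321-avoiding if there are
no positions `a < b < c` with `p a > p b > p c`. -/
def Avoids321 {n : ℕ} (p : Equiv.Perm (Fin n)) : Prop :=
  ∀ a b c : Fin n, a < b → b < c → ¬ (p b < p a ∧ p c < p b)

/-- The excedence set of `p`, as a set of 1-based positions `i ∈ [n]` with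
`p(i) > i`, i.e. (0-based) `(p ⟨i-1⟩ : ℕ) > i - 1`. -/
def Exc {n : ℕ} (p : Equiv.Perm (Fin n)) : Set ℕ :=
  {i | ∃ h : 1 ≤ i ∧ i ≤ n,
        (i - 1 : ℕ) <
          (p ⟨i - 1, Nat.lt_of_lt_of_le (Nat.sub_lt h.1 Nat.one_pos) h.2⟩ : ℕ)}

/-- A set partition of `[n]` (a setoid on `Fin n`, `e : Fin n` representing
`e+1 ∈ [n]`) is noncrossing if there are no `a < b < c < d` with `a, c` in
one block and `b, d` in a different block. -/
def IsNoncrossing {n : ℕ} (r : Setoid (Fin n)) : Prop :=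
  ¬ ∃ a b c d : Fin n, a < b ∧ b < c ∧ c < d ∧ r.r a c ∧ r.r b d ∧ ¬ r.r a b

namespace NC321
open Finset
attribute [local instance] Classical.propDecidable

noncomputable section

variable {n : ℕ}

/-- number of elements of `S` with value `< x`, as an integer -/
def cnt (S : Finset (Fin n)) (x : ℕ) : ℤ := ((S.filter (fun a : Fin n => (a : ℕ) < x)).card : ℤ)

/-- indicator of `x ∈ S` -/
def indic (S : Finset (Fin n)) (x : ℕ) : ℤ :=
  if hx : x < n then (if (⟨x, hx⟩ : Fin n) ∈ S then 1 else 0) else 0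

lemma indic_nonneg (S : Finset (Fin n)) (x : ℕ) : 0 ≤ indic S x := by
  unfold indic; split <;> [skip; norm_num]; split <;> norm_num

lemma indic_le_one (S : Finset (Fin n)) (x : ℕ) : indic S x ≤ 1 := by
  unfold indic; split <;> [skip; norm_num]; split <;> norm_num

lemma indic_eq_one_iff (S : Finset (Fin n)) (x : ℕ) :
    indic S x = 1 ↔ ∃ a ∈ S, (a : ℕ) = x := by
  unfold indic
  split
  · rename_i hx
    split
    · rename_i h
      exact ⟨fun _ => ⟨⟨x, hx⟩, h, rfl⟩, fun _ => rfl⟩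
    · rename_i h
      constructor
      · norm_num
      · rintro ⟨a, ha, rfl⟩
        exact absurd (by simpa using ha) h
  · rename_i hx
    constructor
    · norm_num
    · rintro ⟨a, _, rfl⟩; exact absurd a.2 hx

lemma indic_of_mem {S : Finset (Fin n)} {a : Fin n} (ha : a ∈ S) : indic S (a : ℕ) = 1 :=
  (indic_eq_one_iff S _).2 ⟨a, ha, rfl⟩

lemma cnt_succ (S : Finset (Fin n)) (x : ℕ) : cnt S (x + 1) = cnt S x + indic S x := by
  unfold cnt
  have hsplit : S.filter (fun a : Fin n => (a : ℕ) < x + 1) =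
      S.filter (fun a : Fin n => (a : ℕ) < x) ∪ S.filter (fun a : Fin n => (a : ℕ) = x) := by
    ext a; simp only [mem_filter, mem_union, ← and_or_left]
    refine and_congr_right fun _ => ?_; omega
  have hdisj : Disjoint (S.filter (fun a : Fin n => (a : ℕ) < x))
      (S.filter (fun a : Fin n => (a : ℕ) = x)) := by
    rw [Finset.disjoint_left]; intro a ha hb
    simp only [mem_filter] at ha hb; omega
  rw [hsplit, card_union_of_disjoint hdisj]
  have : ((S.filter (fun a : Fin n => (a : ℕ) = x)).card : ℤ) = indic S x := by
    unfold indic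
    split
    · rename_i hx
      split
      · rename_i h
        have : S.filter (fun a : Fin n => (a : ℕ) = x) = {⟨x, hx⟩} := by
          ext a; simp only [mem_filter, mem_singleton]
          constructor
          · rintro ⟨_, h2⟩; exact Fin.ext h2
          · rintro rfl; exact ⟨h, rfl⟩
        rw [this]; simp
      · rename_i h
        have : S.filter (fun a : Fin n => (a : ℕ) = x) = ∅ := by
          ext a; simp only [mem_filter, Finset.notMem_empty, iff_false]
          rintro ⟨ha, rfl⟩; exact h ha
        rw [this]; simp
    · rename_i hx
      have : S.filter (fun a : Fin n => (a : ℕ) = x) = ∅ := by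
        ext a; simp only [mem_filter, Finset.notMem_empty, iff_false]
        rintro ⟨_, rfl⟩; exact hx a.2
      rw [this]; simp
  push_cast
  omega

lemma cnt_zero (S : Finset (Fin n)) : cnt S 0 = 0 := by
  unfold cnt
  have : S.filter (fun a : Fin n => (a : ℕ) < 0) = ∅ := by
    ext a; simp
  rw [this]; simp

lemma cnt_nonneg (S : Finset (Fin n)) (x : ℕ) : 0 ≤ cnt S x := by
  exact Int.natCast_nonneg _

lemma cnt_mono (S : Finset (Fin n)) {x y : ℕ} (h : x ≤ y) : cnt S x ≤ cnt S y := by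
  unfold cnt
  have : (S.filter (fun a : Fin n => (a : ℕ) < x)).card ≤
      (S.filter (fun a : Fin n => (a : ℕ) < y)).card := by
    apply Finset.card_le_card
    intro a ha
    simp only [mem_filter] at ha ⊢
    exact ⟨ha.1, lt_of_lt_of_le ha.2 h⟩
  exact_mod_cast this

lemma cnt_all (S : Finset (Fin n)) {x : ℕ} (hS : ∀ a ∈ S, (a : ℕ) < x) :
    cnt S x = S.card := by
  unfold cnt
  rw [Finset.filter_true_of_mem hS]

/-- `cnt` difference as a band count -/
lemma cnt_diff (S : Finset (Fin n)) {x w : ℕ} (h : x ≤ w) :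
    cnt S w - cnt S x = ((S.filter (fun a : Fin n => x ≤ (a : ℕ) ∧ (a : ℕ) < w)).card : ℤ) := by
  unfold cnt
  have hsplit : S.filter (fun a : Fin n => (a : ℕ) < w) =
      S.filter (fun a : Fin n => (a : ℕ) < x) ∪
        S.filter (fun a : Fin n => x ≤ (a : ℕ) ∧ (a : ℕ) < w) := by
    ext a; simp only [mem_filter, mem_union, ← and_or_left]
    refine and_congr_right fun _ => ?_; omega
  have hdisj : Disjoint (S.filter (fun a : Fin n => (a : ℕ) < x))
      (S.filter (fun a : Fin n => x ≤ (a : ℕ) ∧ (a : ℕ) < w)) := by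
    rw [Finset.disjoint_left]; intro a ha hb
    simp only [mem_filter] at ha hb; omega
  rw [hsplit, card_union_of_disjoint hdisj]
  push_cast; ring


/-! ### Height functions -/

variable (P V : Finset (Fin n))

/-- height at position `x` -/
def Ht (x : ℕ) : ℤ := 1 + cnt P x - cnt V x

/-- height between positions `x` and `x+1` -/
def Lt (x : ℕ) : ℤ := 1 + cnt P x - cnt V (x + 1)

lemma Ht_zero : Ht P V 0 = 1 := by unfold Ht; rw [cnt_zero, cnt_zero]; ring

lemma Lt_eq : Lt P V x = Ht P V x - indic V x := by
  unfold Ht Lt; rw [cnt_succ]; ring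

lemma Ht_succ : Ht P V (x + 1) = Lt P V x + indic P x := by
  unfold Ht Lt; rw [cnt_succ P]; ring

lemma Ht_succ_le : Ht P V (x + 1) ≤ Ht P V x + 1 := by
  rw [Ht_succ, Lt_eq]
  have := indic_le_one P x
  have := indic_nonneg V x
  omega

/-- the domination condition -/
def Dom : Prop := ∀ y : ℕ, cnt V (y + 1) ≤ cnt P y

variable {P V}

lemma Lt_pos (dom : Dom P V) (x : ℕ) : 1 ≤ Lt P V x := by
  have := dom x
  unfold Lt
  omega

lemma Ht_pos (dom : Dom P V) (x : ℕ) : 1 ≤ Ht P V x := by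
  cases x with
  | zero => rw [Ht_zero]
  | succ y =>
    rw [Ht_succ]
    have := Lt_pos dom y
    have := indic_nonneg P y
    omega

variable (P V)

/-- candidates: positions `z ≤ x` at the same height with no intermediate dip -/
def cand (x : Fin n) : Finset (Fin n) :=
  univ.filter (fun z : Fin n => z ≤ x ∧ Ht P V z = Ht P V x ∧
    ∀ w ∈ Finset.Ico (z : ℕ) (x : ℕ), Ht P V x ≤ Lt P V w)

lemma mem_cand {x z : Fin n} : z ∈ cand P V x ↔
    z ≤ x ∧ Ht P V (z : ℕ) = Ht P V x ∧
      ∀ w, (z : ℕ) ≤ w → w < (x : ℕ) → Ht P V (x : ℕ) ≤ Lt P V w := by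
  unfold cand
  simp only [mem_filter, mem_univ, true_and, Finset.mem_Ico, and_imp]

lemma self_mem_cand (x : Fin n) : x ∈ cand P V x := by
  rw [mem_cand]
  exact ⟨le_refl _, rfl, fun w h1 h2 => absurd (lt_of_le_of_lt h1 h2) (lt_irrefl _)⟩

/-- the fiber map: `ff x` is the least candidate -/
def ff (x : Fin n) : Fin n := (cand P V x).min' ⟨x, self_mem_cand P V x⟩

lemma ff_mem (x : Fin n) : ff P V x ∈ cand P V x := Finset.min'_mem _ _

lemma ff_le (x : Fin n) : ff P V x ≤ x := ((mem_cand P V).1 (ff_mem P V x)).1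

variable {P V}

lemma ff_min {x z : Fin n} (hz : z ∈ cand P V x) : ff P V x ≤ z := Finset.min'_le _ _ hz

lemma ff_eq_ff {x y : Fin n} (hxy : x ≤ y) (hH : Ht P V (x : ℕ) = Ht P V (y : ℕ))
    (hL : ∀ w, (x : ℕ) ≤ w → w < (y : ℕ) → Ht P V (x : ℕ) ≤ Lt P V w) :
    ff P V x = ff P V y := by
  have hxy' : (x : ℕ) ≤ (y : ℕ) := hxy
  have hsub : ∀ z : Fin n, z ∈ cand P V x → z ∈ cand P V y := by
    intro z hz
    rw [mem_cand] at hz ⊢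
    refine ⟨le_trans hz.1 hxy, hz.2.1.trans hH, fun w hw1 hw2 => ?_⟩
    rcases lt_or_ge w (x : ℕ) with h | h
    · exact hH ▸ hz.2.2 w hw1 h
    · exact hH ▸ hL w h hw2
  have hsub2 : ∀ z : Fin n, z ∈ cand P V y → z ≤ x → z ∈ cand P V x := by
    intro z hz hzx
    rw [mem_cand] at hz ⊢
    refine ⟨hzx, hz.2.1.trans hH.symm, fun w hw1 hw2 => ?_⟩
    exact hH ▸ hz.2.2 w hw1 (lt_of_lt_of_le hw2 hxy')
  have hx_cand_y : x ∈ cand P V y := by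
    rw [mem_cand]; exact ⟨hxy, hH, fun w hw1 hw2 => hH ▸ hL w hw1 hw2⟩
  have h1 : ff P V y ≤ x := ff_min hx_cand_y
  have h2 : ff P V y ∈ cand P V x := hsub2 _ (ff_mem P V y) h1
  have h3 : ff P V x ∈ cand P V y := hsub _ (ff_mem P V x)
  exact le_antisymm (ff_min h2) (ff_min h3)

lemma ff_spec (x : Fin n) : (ff P V x : ℕ) ≤ (x : ℕ) ∧
    Ht P V (ff P V x : ℕ) = Ht P V (x : ℕ) ∧
    ∀ w, (ff P V x : ℕ) ≤ w → w < (x : ℕ) → Ht P V (x : ℕ) ≤ Lt P V w := by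
  have := (mem_cand P V).1 (ff_mem P V x)
  exact ⟨this.1, this.2.1, this.2.2⟩

lemma ff_idem (x : Fin n) : ff P V (ff P V x) = ff P V x := by
  obtain ⟨h1, h2, h3⟩ := ff_spec (P := P) (V := V) x
  exact ff_eq_ff (by exact h1) h2 (fun w hw1 hw2 => h2 ▸ h3 w hw1 hw2)

/-- converse direction of `ff_eq_ff` -/
lemma ff_eq_ff_iff {x y : Fin n} (hxy : x ≤ y) :
    ff P V x = ff P V y ↔ (Ht P V (x : ℕ) = Ht P V (y : ℕ) ∧
      ∀ w, (x : ℕ) ≤ w → w < (y : ℕ) → Ht P V (x : ℕ) ≤ Lt P V w) := by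
  constructor
  · intro h
    obtain ⟨hx1, hx2, hx3⟩ := ff_spec (P := P) (V := V) x
    obtain ⟨hy1, hy2, hy3⟩ := ff_spec (P := P) (V := V) y
    rw [h] at hx2
    have hH : Ht P V (x : ℕ) = Ht P V (y : ℕ) := by rw [← hx2, hy2]
    refine ⟨hH, fun w hw1 hw2 => ?_⟩
    rw [hH]
    exact hy3 w (le_trans (by rw [h] at hx1; exact hx1) hw1) hw2
  · rintro ⟨hH, hL⟩
    exact ff_eq_ff hxy hH hL


/-! ### Opens -/

lemma indic_eq_zero_or_one (S : Finset (Fin n)) (x : ℕ) :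
    indic S x = 0 ∨ indic S x = 1 := by
  unfold indic; split
  · split
    · right; rfl
    · left; rfl
  · left; rfl

/-- `x` is an "open" position: `0` or a successor of an element of `P`. -/
def isOpenPt (P : Finset (Fin n)) (x : Fin n) : Prop :=
  (x : ℕ) = 0 ∨ ∃ a ∈ P, (a : ℕ) + 1 = (x : ℕ)

lemma open_ff {o : Fin n} (ho : isOpenPt P o) : ff P V o = o := by
  rcases ho with h0 | ⟨a, ha, hao⟩
  · exact le_antisymm (ff_le P V o) (by rw [Fin.le_def, h0]; omega)
  · refine le_antisymm (ff_le P V o) ?_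
    by_contra hlt
    push_neg at hlt
    obtain ⟨h1, h2, h3⟩ := ff_spec (P := P) (V := V) o
    have hlt' : (ff P V o : ℕ) < (o : ℕ) := hlt
    have hL : Lt P V (a : ℕ) = Ht P V (o : ℕ) - 1 := by
      have := Ht_succ P V (x := (a : ℕ))
      rw [hao] at this
      rw [this, indic_of_mem ha]; ring
    have := h3 (a : ℕ) (by omega) (by omega)
    omega

lemma ff_open (dom : Dom P V) (x : Fin n) : isOpenPt P (ff P V x) := by
  by_contra hno
  unfold isOpenPt at hno
  push_neg at hno
  obtain ⟨hz0, hzP⟩ := hno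
  set z := ff P V x with hzdef
  obtain ⟨h1, h2, h3⟩ := ff_spec (P := P) (V := V) x
  rw [← hzdef] at h1 h2 h3
  set d := Ht P V (x : ℕ) with hd
  set u := (z : ℕ) - 1 with hu
  have hu1 : u + 1 = (z : ℕ) := by omega
  have hun : u < n := by have := z.2; omega
  have hiP : indic P u = 0 := by
    rcases indic_eq_zero_or_one P u with h | h
    · exact h
    · obtain ⟨a, ha, hau⟩ := (indic_eq_one_iff P u).1 h
      exact absurd (by omega : (a : ℕ) + 1 = (z : ℕ)) (hzP a ha)
  have hHz : Ht P V (z : ℕ) = Lt P V u := by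
    rw [← hu1, Ht_succ, hiP]; ring
  have hd1 : 1 ≤ d := Ht_pos dom _
  -- candidate construction
  rcases indic_eq_zero_or_one V u with hiV | hiV
  · -- height stays: u is a candidate
    have hHu : Ht P V u = d := by
      have := Lt_eq P V (x := u)
      rw [hiV] at this
      omega
    have hcand : (⟨u, hun⟩ : Fin n) ∈ cand P V x := by
      rw [mem_cand]
      refine ⟨by rw [Fin.le_def]; simpa using by omega, by simpa using hHu, ?_⟩
      intro w hw1 hw2
      simp only at hw1
      rcases eq_or_lt_of_le hw1 with rfl | hw
      · rw [← hd, ← hHz, h2]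
      · exact h3 w (by omega) hw2
    have := ff_min hcand
    rw [Fin.le_def] at this
    simp only at this
    have hzz : ((ff P V x : Fin n) : ℕ) = (z : ℕ) := by rw [← hzdef]
    omega
  · -- dip hunting
    have hHu : Ht P V u = d + 1 := by
      have := Lt_eq P V (x := u)
      rw [hiV] at this
      omega
    have hW0 : (0 : ℕ) ∈ (Finset.range (z : ℕ)).filter (fun w => Ht P V w ≤ d) := by
      simp only [Finset.mem_filter, Finset.mem_range]
      exact ⟨by omega, by rw [Ht_zero]; omega⟩
    set W := (Finset.range (z : ℕ)).filter (fun w => Ht P V w ≤ d) with hWdef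
    set ws := W.max' ⟨0, hW0⟩ with hws
    have hwsW : ws ∈ W := Finset.max'_mem _ _
    have hws1 : ws < (z : ℕ) := by
      have := (Finset.mem_filter.1 hwsW).1; simpa using this
    have hws2 : Ht P V ws ≤ d := (Finset.mem_filter.1 hwsW).2
    have hmax : ∀ w, w < (z : ℕ) → Ht P V w ≤ d → w ≤ ws := by
      intro w hw1 hw2
      exact Finset.le_max' _ _ (Finset.mem_filter.2 ⟨Finset.mem_range.2 hw1, hw2⟩)
    have hne : ws + 1 ≠ (z : ℕ) := by
      intro h
      have : ws = u := by omega
      rw [this, hHu] at hws2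
      omega
    have hws3 : ws + 1 < (z : ℕ) := by omega
    have hgt : ∀ w, ws < w → w < (z : ℕ) → d + 1 ≤ Ht P V w := by
      intro w hw1 hw2
      by_contra hh
      push_neg at hh
      have := hmax w hw2 (by omega)
      omega
    have hHws : Ht P V ws = d := by
      have h5 := hgt (ws + 1) (by omega) hws3
      have h6 := Ht_succ_le P V (x := ws)
      omega
    have hwsn : ws < n := by have := z.2; omega
    have hcand : (⟨ws, hwsn⟩ : Fin n) ∈ cand P V x := by
      rw [mem_cand]
      refine ⟨by rw [Fin.le_def]; simpa using by omega, by simpa using hHws, ?_⟩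
      intro w hw1 hw2
      simp only at hw1
      rcases lt_or_ge w (z : ℕ) with hwz | hwz
      · rcases eq_or_lt_of_le (by omega : w + 1 ≤ (z : ℕ)) with heq | hlt
        · -- w = u
          have : w = u := by omega
          rw [this, ← hHz, h2]
        · have h7 := hgt (w + 1) (by omega) hlt
          have h8 := Ht_succ P V (x := w)
          have h9 := indic_le_one P w
          omega
      · exact h3 w hwz hw2
    have := ff_min hcand
    rw [Fin.le_def] at this
    simp only at this
    have hzz : ((ff P V x : Fin n) : ℕ) = (z : ℕ) := by rw [← hzdef]
    omega

/-- every nonzero fiber is closed by an element of `V` which is its max -/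
lemma exists_close (dom : Dom P V) (hcard : P.card = V.card)
    (hP1 : ∀ a ∈ P, (a : ℕ) + 1 < n) {o : Fin n} (ho : ff P V o = o) (ho0 : (o : ℕ) ≠ 0) :
    ∃ v : Fin n, ff P V v = o ∧ v ∈ V ∧ ∀ x : Fin n, ff P V x = o → x ≤ v := by
  have hoO : isOpenPt P o := by rw [← ho]; exact ff_open dom o
  obtain ⟨a, ha, hao⟩ : ∃ a ∈ P, (a : ℕ) + 1 = (o : ℕ) := by
    rcases hoO with h | h
    · exact absurd h ho0
    · exact h
  have hHo : 2 ≤ Ht P V (o : ℕ) := by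
    have h1 := Ht_succ P V (x := (a : ℕ))
    rw [hao] at h1
    rw [h1, indic_of_mem ha]
    have := Lt_pos dom (a : ℕ)
    omega
  have hn1 : (n - 1) ∈ (Finset.range n).filter
      (fun w => (o : ℕ) ≤ w ∧ Lt P V w < Ht P V (o : ℕ)) := by
    have hn : 1 ≤ n := by have := o.2; omega
    simp only [Finset.mem_filter, Finset.mem_range]
    refine ⟨by omega, by have := o.2; omega, ?_⟩
    have hL : Lt P V (n - 1) = 1 := by
      unfold Lt
      rw [cnt_all P (fun b hb => by have := hP1 b hb; omega),
        cnt_all V (fun b _ => by have := b.2; omega), hcard]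
      ring
    omega
  set cset := (Finset.range n).filter
      (fun w => (o : ℕ) ≤ w ∧ Lt P V w < Ht P V (o : ℕ)) with hcset
  set c := cset.min' ⟨_, hn1⟩ with hcdef
  have hcmem : c ∈ cset := Finset.min'_mem _ _
  simp only [hcset, Finset.mem_filter, Finset.mem_range] at hcmem
  obtain ⟨hcn, hoc, hLc⟩ := hcmem
  have hmin : ∀ w, (o : ℕ) ≤ w → w < c → Ht P V (o : ℕ) ≤ Lt P V w := by
    intro w hw1 hw2
    by_contra hh
    push_neg at hh
    have : w ∈ cset := by
      simp only [hcset, Finset.mem_filter, Finset.mem_range]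
      exact ⟨by omega, hw1, hh⟩
    have := Finset.min'_le _ _ this
    omega
  have hHc_ge : Ht P V (o : ℕ) ≤ Ht P V c := by
    rcases eq_or_lt_of_le hoc with heq | hlt
    · rw [← heq]
    · have h1 := hmin (c - 1) (by omega) (by omega)
      have h2 := Ht_succ P V (x := c - 1)
      rw [(by omega : c - 1 + 1 = c)] at h2
      have := indic_nonneg P (c - 1)
      omega
  have hiVc : indic V c = 1 := by
    have h1 := Lt_eq P V (x := c)
    rcases indic_eq_zero_or_one V c with h | h
    · rw [h] at h1; omega
    · exact h
  obtain ⟨v, hv, hvc⟩ := (indic_eq_one_iff V c).1 hiVc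
  have hHc : Ht P V c = Ht P V (o : ℕ) := by
    have h1 := Lt_eq P V (x := c)
    omega
  have hffv : ff P V v = o := by
    have : ff P V o = ff P V v := by
      apply ff_eq_ff (by rw [Fin.le_def]; omega)
      · rw [hvc, hHc]
      · intro w hw1 hw2
        rw [hvc] at hw2
        exact hmin w hw1 hw2
    rw [← this, ho]
  refine ⟨v, hffv, hv, ?_⟩
  intro x hx
  have hox : o ≤ x := by rw [← hx]; exact ff_le P V x
  have := (ff_eq_ff_iff hox).1 (by rw [hx, ho])
  obtain ⟨_, hnodip⟩ := this
  rw [Fin.le_def, hvc]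
  by_contra hh
  push_neg at hh
  have := hnodip c hoc (by omega)
  omega

/-- the kernel of `ff` is noncrossing -/
lemma ker_noncrossing (dom : Dom P V) :
    ¬ ∃ a b c d : Fin n, a < b ∧ b < c ∧ c < d ∧
      ff P V a = ff P V c ∧ ff P V b = ff P V d ∧ ¬ (ff P V a = ff P V b) := by
  rintro ⟨a, b, c, d, hab, hbc, hcd, hac, hbd, hnab⟩
  obtain ⟨hH1, hL1⟩ := (ff_eq_ff_iff (le_of_lt (lt_trans hab hbc))).1 hac
  obtain ⟨hH2, hL2⟩ := (ff_eq_ff_iff (le_of_lt (lt_trans hbc hcd))).1 hbd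
  have hab' : (a : ℕ) < (b : ℕ) := hab
  have hbc' : (b : ℕ) < (c : ℕ) := hbc
  have hcd' : (c : ℕ) < (d : ℕ) := hcd
  have hHb : Ht P V (a : ℕ) ≤ Ht P V (b : ℕ) := by
    have h1 := hL1 ((b : ℕ) - 1) (by omega) (by omega)
    have h2 := Ht_succ P V (x := (b : ℕ) - 1)
    rw [(by omega : (b : ℕ) - 1 + 1 = (b : ℕ))] at h2
    have := indic_nonneg P ((b : ℕ) - 1)
    omega
  have hHc : Ht P V (b : ℕ) ≤ Ht P V (c : ℕ) := by
    have h1 := hL2 ((c : ℕ) - 1) (by omega) (by omega)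
    have h2 := Ht_succ P V (x := (c : ℕ) - 1)
    rw [(by omega : (c : ℕ) - 1 + 1 = (c : ℕ))] at h2
    have := indic_nonneg P ((c : ℕ) - 1)
    omega
  have hHbc : Ht P V (b : ℕ) = Ht P V (c : ℕ) := by omega
  have : ff P V b = ff P V c := by
    apply ff_eq_ff (le_of_lt hbc) hHbc
    intro w hw1 hw2
    have := hL1 w (by omega) hw2
    omega
  exact hnab (by rw [this, ← hac])


/-! ### Partition side -/

variable (r : Setoid (Fin n))

def blk (x : Fin n) : Finset (Fin n) := univ.filter (fun y : Fin n => r.r x y)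

lemma mem_blk {x y : Fin n} : y ∈ blk r x ↔ r.r x y := by simp [blk]

lemma self_mem_blk (x : Fin n) : x ∈ blk r x := (mem_blk r).2 (r.refl x)

def bmin (x : Fin n) : Fin n := (blk r x).min' ⟨x, self_mem_blk r x⟩
def bmax (x : Fin n) : Fin n := (blk r x).max' ⟨x, self_mem_blk r x⟩

lemma bmin_rel (x : Fin n) : r.r x (bmin r x) := (mem_blk r).1 (Finset.min'_mem _ _)
lemma bmax_rel (x : Fin n) : r.r x (bmax r x) := (mem_blk r).1 (Finset.max'_mem _ _)
lemma bmin_le (x : Fin n) : bmin r x ≤ x := Finset.min'_le _ _ (self_mem_blk r x)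
lemma le_bmax (x : Fin n) : x ≤ bmax r x := Finset.le_max' _ _ (self_mem_blk r x)
lemma bmin_le_of_rel {x y : Fin n} (h : r.r x y) : bmin r x ≤ y :=
  Finset.min'_le _ _ ((mem_blk r).2 h)
lemma le_bmax_of_rel {x y : Fin n} (h : r.r x y) : y ≤ bmax r x :=
  Finset.le_max' _ _ ((mem_blk r).2 h)

lemma blk_eq_of_rel {x y : Fin n} (h : r.r x y) : blk r x = blk r y := by
  ext z
  rw [mem_blk, mem_blk]
  exact ⟨fun hz => r.trans (r.symm h) hz, fun hz => r.trans h hz⟩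

lemma bmin_eq_of_rel {x y : Fin n} (h : r.r x y) : bmin r x = bmin r y := by
  unfold bmin
  congr 1
  exact blk_eq_of_rel r h

lemma bmax_eq_of_rel {x y : Fin n} (h : r.r x y) : bmax r x = bmax r y := by
  unfold bmax
  congr 1
  exact blk_eq_of_rel r h

lemma rel_of_bmin_eq {x y : Fin n} (h : bmin r x = bmin r y) : r.r x y := by
  have h1 := bmin_rel r x
  have h2 := bmin_rel r y
  rw [h] at h1
  exact r.trans h1 (r.symm h2)

lemma rel_of_bmax_eq {x y : Fin n} (h : bmax r x = bmax r y) : r.r x y := by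
  have h1 := bmax_rel r x
  have h2 := bmax_rel r y
  rw [h] at h1
  exact r.trans h1 (r.symm h2)

lemma bmin_idem (x : Fin n) : bmin r (bmin r x) = bmin r x :=
  bmin_eq_of_rel r (r.symm (bmin_rel r x))

lemma bmax_idem (x : Fin n) : bmax r (bmax r x) = bmax r x :=
  bmax_eq_of_rel r (r.symm (bmax_rel r x))

lemma bmin_bmax (x : Fin n) : bmin r (bmax r x) = bmin r x :=
  bmin_eq_of_rel r (r.symm (bmax_rel r x))

lemma bmax_bmin (x : Fin n) : bmax r (bmin r x) = bmax r x :=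
  bmax_eq_of_rel r (r.symm (bmin_rel r x))

/-- predecessor on `Fin n` (value-wise, total) -/
def predF (x : Fin n) : Fin n := ⟨(x : ℕ) - 1, lt_of_le_of_lt (Nat.sub_le _ _) x.2⟩

/-- successor on `Fin n` (value-wise, total) -/
def succF (x : Fin n) : Fin n := if h : (x : ℕ) + 1 < n then ⟨(x : ℕ) + 1, h⟩ else x

/-- nonzero block minima -/
def minsNZ : Finset (Fin n) :=
  univ.filter (fun x : Fin n => bmin r x = x ∧ (x : ℕ) ≠ 0)

def Pr : Finset (Fin n) := (minsNZ r).image predF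

def Vr : Finset (Fin n) :=
  univ.filter (fun x : Fin n => bmax r x = x ∧ (bmin r x : ℕ) ≠ 0)

lemma mem_Pr {a : Fin n} : a ∈ Pr r ↔
    ∃ m : Fin n, bmin r m = m ∧ (m : ℕ) ≠ 0 ∧ (m : ℕ) = (a : ℕ) + 1 := by
  unfold Pr minsNZ
  simp only [Finset.mem_image, mem_filter, mem_univ, true_and]
  constructor
  · rintro ⟨m, ⟨hm1, hm2⟩, rfl⟩
    exact ⟨m, hm1, hm2, by simp [predF]; omega⟩
  · rintro ⟨m, hm1, hm2, hm3⟩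
    refine ⟨m, ⟨hm1, hm2⟩, ?_⟩
    apply Fin.ext
    simp [predF]; omega

lemma mem_Vr {v : Fin n} : v ∈ Vr r ↔ bmax r v = v ∧ (bmin r v : ℕ) ≠ 0 := by
  unfold Vr; simp

lemma hP1r : ∀ a ∈ Pr r, (a : ℕ) + 1 < n := by
  intro a ha
  obtain ⟨m, _, _, hm3⟩ := (mem_Pr r).1 ha
  have := m.2
  omega

lemma succF_eq {a m : Fin n} (hm3 : (m : ℕ) = (a : ℕ) + 1) : succF a = m := by
  unfold succF
  have hlt : (a : ℕ) + 1 < n := by have := m.2; omega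
  rw [dif_pos hlt]
  exact Fin.ext hm3.symm

lemma minsNZ_card_eq_Pr : (Pr r).card = (minsNZ r).card := by
  unfold Pr
  apply Finset.card_image_of_injOn
  intro x hx y hy hxy
  unfold minsNZ at hx hy
  simp only [Finset.mem_coe, Finset.coe_filter, Set.mem_setOf_eq, mem_filter,
    mem_univ, true_and] at hx hy
  have : (x : ℕ) - 1 = (y : ℕ) - 1 := by
    have := congrArg Fin.val hxy
    simpa [predF] using this
  apply Fin.ext
  omega

lemma hcr : (Pr r).card = (Vr r).card := by
  rw [minsNZ_card_eq_Pr]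
  apply Finset.card_bij (fun m _ => bmax r m)
  · intro m hm
    unfold minsNZ at hm
    simp only [mem_filter, mem_univ, true_and] at hm
    rw [mem_Vr, bmax_idem, bmin_bmax]
    refine ⟨rfl, ?_⟩
    rw [hm.1]
    exact hm.2
  · intro m1 hm1 m2 hm2 heq
    unfold minsNZ at hm1 hm2
    simp only [mem_filter, mem_univ, true_and] at hm1 hm2
    have := rel_of_bmax_eq r heq
    have := bmin_eq_of_rel r this
    rw [hm1.1, hm2.1] at this
    exact this
  · intro v hv
    rw [mem_Vr] at hv
    refine ⟨bmin r v, ?_, ?_⟩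
    · unfold minsNZ
      simp only [mem_filter, mem_univ, true_and]
      exact ⟨bmin_idem r v, hv.2⟩
    · rw [bmax_bmin, hv.1]

lemma domr : Dom (Pr r) (Vr r) := by
  intro y
  unfold cnt
  have : ((Vr r).filter (fun a : Fin n => (a : ℕ) < y + 1)).card ≤
      ((Pr r).filter (fun a : Fin n => (a : ℕ) < y)).card := by
    apply Finset.card_le_card_of_injOn (fun v => predF (bmin r v))
    · intro v hv
      simp only [Finset.mem_coe, mem_filter] at hv ⊢
      obtain ⟨hv1, hv2⟩ := hv
      rw [mem_Vr] at hv1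
      constructor
      · rw [mem_Pr]
        exact ⟨bmin r v, bmin_idem r v, hv1.2, by simp [predF]; omega⟩
      · have h1 : (bmin r v : ℕ) ≤ (v : ℕ) := bmin_le r v
        have h2 : (bmin r v : ℕ) ≠ 0 := hv1.2
        simp [predF]
        omega
    · intro v1 hv1 v2 hv2 heq
      simp only [Finset.coe_filter, Set.mem_setOf_eq] at hv1 hv2
      rw [mem_Vr] at hv1 hv2
      have hval : ((bmin r v1 : Fin n) : ℕ) - 1 = ((bmin r v2 : Fin n) : ℕ) - 1 := by
        have := congrArg Fin.val heq
        simpa [predF] using this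
      have hmin : bmin r v1 = bmin r v2 := by
        apply Fin.ext
        have := hv1.1.2
        have := hv2.1.2
        omega
      have := rel_of_bmin_eq r hmin
      have := bmax_eq_of_rel r this
      rw [hv1.1.1, hv2.1.1] at this
      exact this
  exact_mod_cast this


/-- unfolded noncrossing hypothesis -/
def NCr : Prop :=
  ∀ a b c d : Fin n, a < b → b < c → c < d → r.r a c → r.r b d → r.r a b

variable {r}

lemma close_to_open (hnc : NCr r) {x y v : Fin n} (hr : r.r x y)
    (hv : v ∈ Vr r) (hxv : (x : ℕ) ≤ (v : ℕ)) (hvy : (v : ℕ) < (y : ℕ)) :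
    (x : ℕ) < (bmin r v : ℕ) := by
  rw [mem_Vr] at hv
  by_cases hxv2 : r.r x v
  · exfalso
    have h1 : r.r v y := r.trans (r.symm hxv2) hr
    have h2 : (y : ℕ) ≤ (bmax r v : ℕ) := le_bmax_of_rel r h1
    rw [hv.1] at h2
    omega
  · by_contra h
    push_neg at h
    have hne : (bmin r v : ℕ) ≠ (x : ℕ) := by
      intro heq
      have hbv : bmin r v = x := Fin.ext heq
      have hvx : r.r v x := hbv ▸ bmin_rel r v
      exact hxv2 (r.symm hvx)
    have hxv3 : (x : ℕ) < (v : ℕ) := by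
      rcases eq_or_lt_of_le hxv with heq | hlt
      · have hxy2 : x = v := Fin.ext heq
        exact absurd (hxy2 ▸ r.refl x) hxv2
      · exact hlt
    have := hnc (bmin r v) x v y (by rw [Fin.lt_def]; omega) (by rw [Fin.lt_def]; omega)
      (by rw [Fin.lt_def]; omega) (r.symm (bmin_rel r v)) hr
    exact hxv2 (r.trans (r.symm this) (r.symm (bmin_rel r v)))

lemma open_to_close (hnc : NCr r) {x y a : Fin n} (hr : r.r x y)
    (ha : a ∈ Pr r) (hxa : (x : ℕ) ≤ (a : ℕ)) (hay : (a : ℕ) < (y : ℕ)) :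
    bmax r (succF a) ∈ Vr r ∧ (x : ℕ) ≤ (bmax r (succF a) : ℕ) ∧
      ((bmax r (succF a)) : ℕ) < (y : ℕ) := by
  obtain ⟨m, hm1, hm2, hm3⟩ := (mem_Pr r).1 ha
  rw [succF_eq hm3]
  have hxm : ¬ r.r x m := by
    intro hxm
    have h1 : bmin r m = bmin r x := bmin_eq_of_rel r (r.symm hxm)
    have h2 : (bmin r x : ℕ) ≤ (x : ℕ) := bmin_le r x
    rw [hm1] at h1
    omega
  have hmy : (m : ℕ) < (y : ℕ) := by
    rcases eq_or_lt_of_le (show (m : ℕ) ≤ (y : ℕ) by omega) with heq | hlt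
    · exact (hxm (by rw [show m = y from Fin.ext heq]; exact hr)).elim
    · exact hlt
  have hMV : bmax r m ∈ Vr r := by
    rw [mem_Vr, bmax_idem, bmin_bmax, hm1]
    exact ⟨rfl, hm2⟩
  have hmM : (m : ℕ) ≤ (bmax r m : ℕ) := le_bmax r m
  refine ⟨hMV, by omega, ?_⟩
  by_contra hMy
  push_neg at hMy
  rcases eq_or_lt_of_le hMy with heq | hlt
  · have hmy : r.r m y := by
      rw [show y = bmax r m from Fin.ext heq]
      exact bmax_rel r m
    exact hxm (r.trans hr (r.symm hmy))
  · have := hnc x m y (bmax r m) (by rw [Fin.lt_def]; omega) (by rw [Fin.lt_def]; omega)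
      (by rw [Fin.lt_def]; omega) hr (bmax_rel r m)
    exact hxm this

/-- closings are dominated by openings on any band starting at a block element -/
lemma band_le (hnc : NCr r) {x y : Fin n} (hr : r.r x y) {u w : ℕ}
    (huy : u ≤ (y : ℕ)) (hwu : ∀ v : Fin n, v ∈ Vr r → (x : ℕ) ≤ (v : ℕ) →
      (v : ℕ) < u → (v : ℕ) ≤ w) (hw : w ≤ u) :
    ((Vr r).filter (fun v : Fin n => (x : ℕ) ≤ (v : ℕ) ∧ (v : ℕ) < u)).card ≤
      ((Pr r).filter (fun a : Fin n => (x : ℕ) ≤ (a : ℕ) ∧ (a : ℕ) < w)).card := by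
  apply Finset.card_le_card_of_injOn (fun v => predF (bmin r v))
  · intro v hv
    simp only [Finset.mem_coe, mem_filter] at hv ⊢
    obtain ⟨hv1, hv2, hv3⟩ := hv
    have hbm : (x : ℕ) < (bmin r v : ℕ) :=
      close_to_open hnc hr hv1 hv2 (by omega)
    have hble : (bmin r v : ℕ) ≤ (v : ℕ) := bmin_le r v
    have hvw : (v : ℕ) ≤ w := hwu v hv1 hv2 hv3
    refine ⟨?_, ?_⟩
    · rw [mem_Pr]
      rw [mem_Vr] at hv1
      exact ⟨bmin r v, bmin_idem r v, by omega, by simp [predF]; omega⟩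
    · simp only [predF]
      constructor <;> omega
  · intro v1 hv1 v2 hv2 heq
    simp only [Finset.mem_coe, mem_filter] at hv1 hv2
    have hb1 : (x : ℕ) < (bmin r v1 : ℕ) := close_to_open hnc hr hv1.1 hv1.2.1 (by omega)
    have hb2 : (x : ℕ) < (bmin r v2 : ℕ) := close_to_open hnc hr hv2.1 hv2.2.1 (by omega)
    have hval : (bmin r v1 : ℕ) - 1 = (bmin r v2 : ℕ) - 1 := by
      have := congrArg Fin.val heq
      simpa [predF] using this
    have hmin : bmin r v1 = bmin r v2 := Fin.ext (by omega)
    have hrel := rel_of_bmin_eq r hmin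
    have := bmax_eq_of_rel r hrel
    rw [((mem_Vr r).1 hv1.1).1, ((mem_Vr r).1 hv2.1).1] at this
    exact this

/-- equality of openings and closings on the full band `[x, y)` -/
lemma band_eq (hnc : NCr r) {x y : Fin n} (hr : r.r x y) (hxy : (x : ℕ) ≤ (y : ℕ)) :
    ((Vr r).filter (fun v : Fin n => (x : ℕ) ≤ (v : ℕ) ∧ (v : ℕ) < (y : ℕ))).card =
      ((Pr r).filter (fun a : Fin n => (x : ℕ) ≤ (a : ℕ) ∧ (a : ℕ) < (y : ℕ))).card := by
  apply le_antisymm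
  · exact band_le hnc hr (le_refl _) (fun v _ _ h => by omega) (le_refl _)
  · apply Finset.card_le_card_of_injOn (fun a => bmax r (succF a))
    · intro a ha
      simp only [Finset.mem_coe, mem_filter] at ha ⊢
      obtain ⟨ha1, ha2, ha3⟩ := ha
      obtain ⟨h1, h2, h3⟩ := open_to_close hnc hr ha1 ha2 ha3
      exact ⟨h1, h2, h3⟩
    · intro a1 ha1 a2 ha2 heq
      simp only [Finset.mem_coe, mem_filter] at ha1 ha2
      obtain ⟨m1, hm11, hm12, hm13⟩ := (mem_Pr r).1 ha1.1
      obtain ⟨m2, hm21, hm22, hm23⟩ := (mem_Pr r).1 ha2.1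
      have heq' : bmax r (succF a1) = bmax r (succF a2) := heq
      rw [succF_eq hm13, succF_eq hm23] at heq'
      have hrel := rel_of_bmax_eq r heq'
      have := bmin_eq_of_rel r hrel
      rw [hm11, hm21] at this
      apply Fin.ext
      have := congrArg Fin.val this
      omega

lemma Ht_rel (hnc : NCr r) {x y : Fin n} (hxy : x ≤ y) (hr : r.r x y) :
    Ht (Pr r) (Vr r) (x : ℕ) = Ht (Pr r) (Vr r) (y : ℕ) := by
  have hxy' : (x : ℕ) ≤ (y : ℕ) := hxy
  have h1 := cnt_diff (Pr r) hxy'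
  have h2 := cnt_diff (Vr r) hxy'
  have h3 := band_eq hnc hr hxy'
  unfold Ht
  have h3' : (((Vr r).filter (fun v : Fin n => (x : ℕ) ≤ (v : ℕ) ∧ (v : ℕ) < (y : ℕ))).card : ℤ) =
      (((Pr r).filter (fun a : Fin n => (x : ℕ) ≤ (a : ℕ) ∧ (a : ℕ) < (y : ℕ))).card : ℤ) := by
    exact_mod_cast h3
  omega

lemma Lt_rel (hnc : NCr r) {x y : Fin n} (hr : r.r x y) :
    ∀ w, (x : ℕ) ≤ w → w < (y : ℕ) → Ht (Pr r) (Vr r) (x : ℕ) ≤ Lt (Pr r) (Vr r) w := by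
  intro w hw1 hw2
  have h1 := cnt_diff (Pr r) hw1
  have h2 := cnt_diff (Vr r) (show (x : ℕ) ≤ w + 1 by omega)
  have h3 := band_le hnc hr (u := w + 1) (w := w) (by omega)
    (fun v _ _ h => by omega) (by omega)
  unfold Ht Lt
  have h3' : (((Vr r).filter (fun v : Fin n => (x : ℕ) ≤ (v : ℕ) ∧ (v : ℕ) < w + 1)).card : ℤ) ≤
      (((Pr r).filter (fun a : Fin n => (x : ℕ) ≤ (a : ℕ) ∧ (a : ℕ) < w)).card : ℤ) := by
    exact_mod_cast h3
  omega

/-- Main partition-side lemma: the fiber map of `(Pr r, Vr r)` recovers block minima. -/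
lemma ff_eq_bmin (hnc : NCr r) (x : Fin n) : ff (Pr r) (Vr r) x = bmin r x := by
  have hmx : r.r (bmin r x) x := r.symm (bmin_rel r x)
  have hmle : bmin r x ≤ x := bmin_le r x
  have hcand : bmin r x ∈ cand (Pr r) (Vr r) x := by
    rw [mem_cand]
    refine ⟨hmle, Ht_rel hnc hmle hmx, fun w hw1 hw2 => ?_⟩
    rw [← Ht_rel hnc hmle hmx]
    exact Lt_rel hnc hmx w hw1 hw2
  apply le_antisymm (ff_min hcand)
  by_contra hlt
  push_neg at hlt
  have hlt' : (ff (Pr r) (Vr r) x : ℕ) < (bmin r x : ℕ) := hlt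
  obtain ⟨h1, h2, h3⟩ := ff_spec (P := Pr r) (V := Vr r) x
  have hm0 : (bmin r x : ℕ) ≠ 0 := by omega
  have hPmem : predF (bmin r x) ∈ Pr r := by
    rw [mem_Pr]
    exact ⟨bmin r x, bmin_idem r x, hm0, by simp [predF]; omega⟩
  have hind : indic (Pr r) ((bmin r x : ℕ) - 1) = 1 := by
    have := indic_of_mem hPmem
    simpa [predF] using this
  have hHm : Ht (Pr r) (Vr r) ((bmin r x : ℕ)) = Ht (Pr r) (Vr r) (x : ℕ) :=
    Ht_rel hnc hmle hmx
  have hLu : Lt (Pr r) (Vr r) ((bmin r x : ℕ) - 1) = Ht (Pr r) (Vr r) (x : ℕ) - 1 := by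
    have hs := Ht_succ (Pr r) (Vr r) (x := (bmin r x : ℕ) - 1)
    rw [(by omega : (bmin r x : ℕ) - 1 + 1 = (bmin r x : ℕ))] at hs
    rw [hHm] at hs
    omega
  have := h3 ((bmin r x : ℕ) - 1) (by omega) (by omega)
  omega

/-- the setoid is recovered as the kernel of `ff` -/
lemma setoid_eq_ker (hnc : NCr r) : ∀ x y : Fin n,
    r.r x y ↔ ff (Pr r) (Vr r) x = ff (Pr r) (Vr r) y := by
  intro x y
  rw [ff_eq_bmin hnc, ff_eq_bmin hnc]
  constructor
  · exact bmin_eq_of_rel r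
  · exact rel_of_bmin_eq r


/-! ### Rank lemmas -/

lemma card_univ_le {k : ℕ} (i : Fin k) :
    ((univ : Finset (Fin k)).filter (fun j : Fin k => j ≤ i)).card = (i : ℕ) + 1 := by
  rw [← Finset.card_range ((i : ℕ) + 1)]
  refine Finset.card_bij (fun j _ => (j : ℕ)) ?_ ?_ ?_
  · intro j hj
    simp only [mem_filter, mem_univ, true_and] at hj
    simp only [Finset.mem_range]
    have : (j : ℕ) ≤ (i : ℕ) := hj
    omega
  · intro j1 _ j2 _ h
    exact Fin.ext h
  · intro m hm
    simp only [Finset.mem_range] at hm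
    have hmk : m < k := by have := i.2; omega
    refine ⟨⟨m, hmk⟩, ?_, rfl⟩
    simp only [mem_filter, mem_univ, true_and]
    rw [Fin.le_def]
    simp only
    omega

lemma card_univ_lt {k : ℕ} (i : Fin k) :
    ((univ : Finset (Fin k)).filter (fun j : Fin k => j < i)).card = (i : ℕ) := by
  rw [← Finset.card_range (i : ℕ)]
  refine Finset.card_bij (fun j _ => (j : ℕ)) ?_ ?_ ?_
  · intro j hj
    simp only [mem_filter, mem_univ, true_and] at hj
    simp only [Finset.mem_range]
    exact hj
  · intro j1 _ j2 _ h
    exact Fin.ext h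
  · intro m hm
    simp only [Finset.mem_range] at hm
    have hmk : m < k := by have := i.2; omega
    refine ⟨⟨m, hmk⟩, ?_, rfl⟩
    simp only [mem_filter, mem_univ, true_and]
    rw [Fin.lt_def]
    simpa using hm

lemma filter_emb_le (s : Finset (Fin n)) {k : ℕ} (h : s.card = k) (i : Fin k) :
    s.filter (fun a : Fin n => a ≤ s.orderEmbOfFin h i) =
      ((univ : Finset (Fin k)).filter (fun j : Fin k => j ≤ i)).image
        (fun j => s.orderEmbOfFin h j) := by
  ext a
  simp only [mem_filter, Finset.mem_image, mem_univ, true_and]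
  constructor
  · rintro ⟨ha, hle⟩
    have : a ∈ Set.range (s.orderEmbOfFin h) := by
      rw [Finset.range_orderEmbOfFin]
      exact ha
    obtain ⟨j, hj⟩ := this
    refine ⟨j, ?_, hj⟩
    rw [← (s.orderEmbOfFin h).le_iff_le, hj]
    exact hle
  · rintro ⟨j, hji, rfl⟩
    exact ⟨Finset.orderEmbOfFin_mem s h j, (s.orderEmbOfFin h).le_iff_le.2 hji⟩

lemma filter_emb_lt (s : Finset (Fin n)) {k : ℕ} (h : s.card = k) (i : Fin k) :
    s.filter (fun a : Fin n => a < s.orderEmbOfFin h i) =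
      ((univ : Finset (Fin k)).filter (fun j : Fin k => j < i)).image
        (fun j => s.orderEmbOfFin h j) := by
  ext a
  simp only [mem_filter, Finset.mem_image, mem_univ, true_and]
  constructor
  · rintro ⟨ha, hle⟩
    have : a ∈ Set.range (s.orderEmbOfFin h) := by
      rw [Finset.range_orderEmbOfFin]
      exact ha
    obtain ⟨j, hj⟩ := this
    refine ⟨j, ?_, hj⟩
    rw [← (s.orderEmbOfFin h).lt_iff_lt, hj]
    exact hle
  · rintro ⟨j, hji, rfl⟩
    exact ⟨Finset.orderEmbOfFin_mem s h j, (s.orderEmbOfFin h).lt_iff_lt.2 hji⟩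

lemma card_emb_le (s : Finset (Fin n)) {k : ℕ} (h : s.card = k) (i : Fin k) :
    (s.filter (fun a : Fin n => a ≤ s.orderEmbOfFin h i)).card = (i : ℕ) + 1 := by
  rw [filter_emb_le, Finset.card_image_of_injective _ (s.orderEmbOfFin h).injective,
    card_univ_le]

lemma card_emb_lt (s : Finset (Fin n)) {k : ℕ} (h : s.card = k) (i : Fin k) :
    (s.filter (fun a : Fin n => a < s.orderEmbOfFin h i)).card = (i : ℕ) := by
  rw [filter_emb_lt, Finset.card_image_of_injective _ (s.orderEmbOfFin h).injective,
    card_univ_lt]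

lemma compl_filter_le (S : Finset (Fin n)) (x : Fin n) :
    ((Sᶜ).filter (fun a : Fin n => a ≤ x)).card + (S.filter (fun a : Fin n => a ≤ x)).card
      = (x : ℕ) + 1 := by
  have hu : (Sᶜ).filter (fun a : Fin n => a ≤ x) ∪ S.filter (fun a : Fin n => a ≤ x) =
      (univ : Finset (Fin n)).filter (fun a : Fin n => a ≤ x) := by
    rw [← Finset.filter_union]
    congr 1
    ext a; simp [em']
  have hd : Disjoint ((Sᶜ).filter (fun a : Fin n => a ≤ x))
      (S.filter (fun a : Fin n => a ≤ x)) := by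
    rw [Finset.disjoint_left]
    intro a ha hb
    exact (Finset.mem_compl.1 (Finset.mem_filter.1 ha).1) (Finset.mem_filter.1 hb).1
  rw [← card_univ_le x, ← hu, card_union_of_disjoint hd]


/-! ### The fill permutation -/

variable (P V)

lemma compl_card (hc : P.card = V.card) :
    (Vᶜ : Finset (Fin n)).card = (Pᶜ : Finset (Fin n)).card := by
  rw [Finset.card_compl, Finset.card_compl, hc]

variable (hc : P.card = V.card)

def fillFun (x : Fin n) : Fin n :=
  if hx : x ∈ P then V.orderEmbOfFin hc.symm ((P.orderIsoOfFin rfl).symm ⟨x, hx⟩)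
  else (Vᶜ).orderEmbOfFin (compl_card P V hc)
    (((Pᶜ).orderIsoOfFin rfl).symm ⟨x, Finset.mem_compl.2 hx⟩)

lemma fill_on_P {x : Fin n} (hx : x ∈ P) :
    ∃ i : Fin P.card, P.orderEmbOfFin rfl i = x ∧
      fillFun P V hc x = V.orderEmbOfFin hc.symm i := by
  refine ⟨(P.orderIsoOfFin rfl).symm ⟨x, hx⟩, ?_, by unfold fillFun; rw [dif_pos hx]⟩
  have := (P.orderIsoOfFin rfl).apply_symm_apply ⟨x, hx⟩
  calc P.orderEmbOfFin rfl ((P.orderIsoOfFin rfl).symm ⟨x, hx⟩)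
      = ((P.orderIsoOfFin rfl) ((P.orderIsoOfFin rfl).symm ⟨x, hx⟩) : Fin n) :=
        (Finset.coe_orderIsoOfFin_apply P rfl _).symm
    _ = x := by rw [this]

lemma fill_on_compl {x : Fin n} (hx : x ∉ P) :
    ∃ i : Fin (Pᶜ : Finset (Fin n)).card, (Pᶜ).orderEmbOfFin rfl i = x ∧
      fillFun P V hc x = (Vᶜ).orderEmbOfFin (compl_card P V hc) i := by
  refine ⟨((Pᶜ).orderIsoOfFin rfl).symm ⟨x, Finset.mem_compl.2 hx⟩, ?_,
    by unfold fillFun; rw [dif_neg hx]⟩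
  have := ((Pᶜ).orderIsoOfFin rfl).apply_symm_apply ⟨x, Finset.mem_compl.2 hx⟩
  calc (Pᶜ).orderEmbOfFin rfl (((Pᶜ).orderIsoOfFin rfl).symm ⟨x, Finset.mem_compl.2 hx⟩)
      = (((Pᶜ).orderIsoOfFin rfl) (((Pᶜ).orderIsoOfFin rfl).symm ⟨x, Finset.mem_compl.2 hx⟩)
          : Fin n) := (Finset.coe_orderIsoOfFin_apply (Pᶜ) rfl _).symm
    _ = x := by rw [this]

lemma fill_mem_V {x : Fin n} (hx : x ∈ P) : fillFun P V hc x ∈ V := by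
  obtain ⟨i, _, h2⟩ := fill_on_P P V hc hx
  rw [h2]
  exact Finset.orderEmbOfFin_mem _ _ _

lemma fill_not_mem_V {x : Fin n} (hx : x ∉ P) : fillFun P V hc x ∉ V := by
  obtain ⟨i, _, h2⟩ := fill_on_compl P V hc hx
  rw [h2]
  have := Finset.orderEmbOfFin_mem (Vᶜ) (compl_card P V hc) i
  exact Finset.mem_compl.1 this

lemma fill_injective : Function.Injective (fillFun P V hc) := by
  intro x y hxy
  by_cases hx : x ∈ P <;> by_cases hy : y ∈ P
  · obtain ⟨i, hi1, hi2⟩ := fill_on_P P V hc hx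
    obtain ⟨j, hj1, hj2⟩ := fill_on_P P V hc hy
    rw [hi2, hj2] at hxy
    rw [← hi1, ← hj1, (V.orderEmbOfFin hc.symm).injective hxy]
  · exact absurd (fill_mem_V P V hc hx) (hxy ▸ fill_not_mem_V P V hc hy)
  · exact absurd (fill_mem_V P V hc hy) (hxy ▸ fill_not_mem_V P V hc hx)
  · obtain ⟨i, hi1, hi2⟩ := fill_on_compl P V hc hx
    obtain ⟨j, hj1, hj2⟩ := fill_on_compl P V hc hy
    rw [hi2, hj2] at hxy
    rw [← hi1, ← hj1, ((Vᶜ).orderEmbOfFin (compl_card P V hc)).injective hxy]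

def fillPerm : Equiv.Perm (Fin n) :=
  Equiv.ofBijective (fillFun P V hc) (Finite.injective_iff_bijective.1 (fill_injective P V hc))

lemma fillPerm_apply (x : Fin n) : fillPerm P V hc x = fillFun P V hc x := rfl

lemma fill_mono_P {x y : Fin n} (hx : x ∈ P) (hy : y ∈ P) (hxy : x < y) :
    fillFun P V hc x < fillFun P V hc y := by
  obtain ⟨i, hi1, hi2⟩ := fill_on_P P V hc hx
  obtain ⟨j, hj1, hj2⟩ := fill_on_P P V hc hy
  rw [hi2, hj2]
  apply (V.orderEmbOfFin hc.symm).strictMono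
  rw [← (P.orderEmbOfFin rfl).lt_iff_lt, hi1, hj1]
  exact hxy

lemma fill_mono_compl {x y : Fin n} (hx : x ∉ P) (hy : y ∉ P) (hxy : x < y) :
    fillFun P V hc x < fillFun P V hc y := by
  obtain ⟨i, hi1, hi2⟩ := fill_on_compl P V hc hx
  obtain ⟨j, hj1, hj2⟩ := fill_on_compl P V hc hy
  rw [hi2, hj2]
  apply ((Vᶜ).orderEmbOfFin (compl_card P V hc)).strictMono
  rw [← ((Pᶜ).orderEmbOfFin rfl).lt_iff_lt, hi1, hj1]
  exact hxy

lemma fill_avoids (a b c : Fin n) (hab : a < b) (hbc : b < c) :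
    ¬ (fillFun P V hc b < fillFun P V hc a ∧ fillFun P V hc c < fillFun P V hc b) := by
  rintro ⟨h1, h2⟩
  by_cases hA : a ∈ P <;> by_cases hB : b ∈ P <;> by_cases hC : c ∈ P
  · exact absurd (fill_mono_P P V hc hA hB hab) (asymm h1)
  · exact absurd (fill_mono_P P V hc hA hB hab) (asymm h1)
  · exact absurd (fill_mono_P P V hc hA hC (lt_trans hab hbc)) (asymm (lt_trans h2 h1))
  · exact absurd (fill_mono_compl P V hc hB hC hbc) (asymm h2)
  · exact absurd (fill_mono_P P V hc hB hC hbc) (asymm h2)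
  · exact absurd (fill_mono_compl P V hc hA hC (lt_trans hab hbc)) (asymm (lt_trans h2 h1))
  · exact absurd (fill_mono_compl P V hc hA hB hab) (asymm h1)
  · exact absurd (fill_mono_compl P V hc hA hB hab) (asymm h1)

/-- excedance property, positive part -/
lemma fill_exc (dom : Dom P V) {x : Fin n} (hx : x ∈ P) :
    (x : ℕ) < (fillFun P V hc x : ℕ) := by
  obtain ⟨i, hi1, hi2⟩ := fill_on_P P V hc hx
  rw [hi2]
  by_contra hle
  push_neg at hle
  have c1 : (V.filter (fun a : Fin n => a ≤ V.orderEmbOfFin hc.symm i)).card = (i : ℕ) + 1 :=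
    card_emb_le V hc.symm i
  have c2 : (i : ℕ) + 1 ≤ (V.filter (fun a : Fin n => (a : ℕ) < (x : ℕ) + 1)).card := by
    rw [← c1]
    apply Finset.card_le_card
    intro a ha
    rw [mem_filter] at ha ⊢
    refine ⟨ha.1, ?_⟩
    have : (a : ℕ) ≤ (V.orderEmbOfFin hc.symm i : ℕ) := ha.2
    omega
  have c3 : (P.filter (fun a : Fin n => (a : ℕ) < (x : ℕ))).card = (i : ℕ) := by
    have h5 := card_emb_lt P rfl i
    rw [hi1] at h5
    rw [← h5]
    exact congrArg Finset.card (Finset.filter_congr (fun a _ => by rw [Fin.lt_def]))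
  have hdom := dom (x : ℕ)
  unfold cnt at hdom
  rw [c3] at hdom
  have : ((i : ℕ) + 1 : ℤ) ≤ ((V.filter (fun a : Fin n => (a : ℕ) < (x : ℕ) + 1)).card : ℤ) := by
    exact_mod_cast c2
  omega

/-- excedance property, negative part -/
lemma fill_nonexc (dom : Dom P V) {x : Fin n} (hx : x ∉ P) :
    (fillFun P V hc x : ℕ) ≤ (x : ℕ) := by
  obtain ⟨i, hi1, hi2⟩ := fill_on_compl P V hc hx
  rw [hi2]
  by_contra hgt
  push_neg at hgt
  have c1 : ((Vᶜ).filter (fun a : Fin n => a ≤ x)).card ≤ (i : ℕ) := by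
    rw [← card_emb_lt (Vᶜ) (compl_card P V hc) i]
    apply Finset.card_le_card
    intro a ha
    rw [mem_filter] at ha ⊢
    refine ⟨ha.1, ?_⟩
    rw [Fin.lt_def]
    have : (a : ℕ) ≤ (x : ℕ) := ha.2
    omega
  have c2 : ((Pᶜ).filter (fun a : Fin n => a ≤ x)).card = (i : ℕ) + 1 := by
    have := card_emb_le (Pᶜ) rfl i
    rw [hi1] at this
    exact this
  have c3 := compl_filter_le V x
  have c4 := compl_filter_le P x
  -- dom at x gives |V ≤ x-1 stuff|; we use dom at x : cnt V (x+1) ≤ cnt P x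
  have hdom := dom (x : ℕ)
  unfold cnt at hdom
  have e1 : (V.filter (fun a : Fin n => (a : ℕ) < (x : ℕ) + 1)).card =
      (V.filter (fun a : Fin n => a ≤ x)).card := by
    apply congrArg Finset.card
    apply Finset.filter_congr
    intro a _
    rw [Fin.le_def]
    constructor <;> intro h <;> omega
  have e2 : (P.filter (fun a : Fin n => (a : ℕ) < (x : ℕ))).card ≤
      (P.filter (fun a : Fin n => a ≤ x)).card := by
    apply Finset.card_le_card
    intro a ha
    rw [mem_filter] at ha ⊢
    refine ⟨ha.1, ?_⟩
    rw [Fin.le_def]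
    have : (a : ℕ) < (x : ℕ) := ha.2
    omega
  rw [e1] at hdom
  have hdom' : (V.filter (fun a : Fin n => a ≤ x)).card ≤
      (P.filter (fun a : Fin n => (a : ℕ) < (x : ℕ))).card := by exact_mod_cast hdom
  omega

/-- uniqueness of the fill permutation -/
lemma fill_unique (q : Equiv.Perm (Fin n))
    (hq1 : ∀ x y : Fin n, x ∈ P → y ∈ P → x < y → q x < q y)
    (hq2 : ∀ x y : Fin n, x ∉ P → y ∉ P → x < y → q x < q y)
    (hq3 : ∀ x ∈ P, q x ∈ V) (hq4 : ∀ x ∉ P, q x ∉ V) :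
    ∀ x : Fin n, q x = fillFun P V hc x := by
  have hfP : (fun i : Fin P.card => q (P.orderEmbOfFin rfl i)) = V.orderEmbOfFin hc.symm := by
    apply Finset.orderEmbOfFin_unique
    · intro i
      exact hq3 _ (Finset.orderEmbOfFin_mem P rfl i)
    · intro i j hij
      exact hq1 _ _ (Finset.orderEmbOfFin_mem P rfl i) (Finset.orderEmbOfFin_mem P rfl j)
        ((P.orderEmbOfFin rfl).strictMono hij)
  have hfC : (fun i : Fin (Pᶜ : Finset (Fin n)).card => q ((Pᶜ).orderEmbOfFin rfl i)) =
      (Vᶜ).orderEmbOfFin (compl_card P V hc) := by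
    apply Finset.orderEmbOfFin_unique
    · intro i
      have := (Pᶜ).orderEmbOfFin_mem rfl i
      exact Finset.mem_compl.2 (hq4 _ (Finset.mem_compl.1 this))
    · intro i j hij
      have hi := Finset.mem_compl.1 ((Pᶜ).orderEmbOfFin_mem rfl i)
      have hj := Finset.mem_compl.1 ((Pᶜ).orderEmbOfFin_mem rfl j)
      exact hq2 _ _ hi hj (((Pᶜ).orderEmbOfFin rfl).strictMono hij)
  intro x
  by_cases hx : x ∈ P
  · obtain ⟨i, hi1, hi2⟩ := fill_on_P P V hc hx
    rw [hi2, ← hi1, ← hfP]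
  · obtain ⟨i, hi1, hi2⟩ := fill_on_compl P V hc hx
    rw [hi2, ← hi1, ← hfC]


/-! ### 321-avoiding permutations -/

variable (p : Equiv.Perm (Fin n))

def Pp : Finset (Fin n) := univ.filter (fun x : Fin n => x < p x)

def Vp : Finset (Fin n) := (Pp p).image p

lemma mem_Pp {x : Fin n} : x ∈ Pp p ↔ x < p x := by simp [Pp]

lemma hcp : (Pp p).card = (Vp p).card :=
  (Finset.card_image_of_injective _ p.injective).symm

lemma hP1p : ∀ a ∈ Pp p, (a : ℕ) + 1 < n := by
  intro a ha
  rw [mem_Pp, Fin.lt_def] at ha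
  have := (p a).2
  omega

lemma domp : Dom (Pp p) (Vp p) := by
  intro y
  unfold cnt
  have : ((Vp p).filter (fun a : Fin n => (a : ℕ) < y + 1)).card ≤
      ((Pp p).filter (fun a : Fin n => (a : ℕ) < y)).card := by
    apply Finset.card_le_card_of_injOn (fun v => p.symm v)
    · intro v hv
      simp only [Finset.mem_coe, mem_filter] at hv ⊢
      obtain ⟨hv1, hv2⟩ := hv
      obtain ⟨x, hx1, hx2⟩ := Finset.mem_image.1 hv1
      have hxv : p.symm v = x := by rw [← hx2, Equiv.symm_apply_apply]
      rw [hxv]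
      refine ⟨hx1, ?_⟩
      rw [mem_Pp, Fin.lt_def] at hx1
      rw [← hx2] at hv2
      omega
    · intro v1 _ v2 _ h
      exact p.symm.injective h
  exact_mod_cast this

variable {p}

/-- 321-avoiding permutations are increasing on excedances -/
lemma exc_mono (hav : ∀ a b c : Fin n, a < b → b < c → ¬(p b < p a ∧ p c < p b))
    {x y : Fin n} (hx : x ∈ Pp p) (hy : y ∈ Pp p) (hxy : x < y) : p x < p y := by
  rw [mem_Pp] at hx hy
  by_contra hle
  push_neg at hle
  have hne : p y ≠ p x := fun h => absurd (p.injective h) (ne_of_gt hxy)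
  have hlt : p y < p x := lt_of_le_of_ne hle hne
  have hex : ∃ k : Fin n, y < k ∧ p k < p y := by
    by_contra hk
    push_neg at hk
    have hsub : ((univ : Finset (Fin n)).filter (fun v : Fin n => v ≤ p y)).image p.symm ⊆
        ((univ : Finset (Fin n)).filter (fun k : Fin n => k ≤ y)).erase x := by
      intro k hk2
      obtain ⟨v, hv1, hv2⟩ := Finset.mem_image.1 hk2
      simp only [mem_filter, mem_univ, true_and] at hv1
      rw [Finset.mem_erase]
      have hpk : p k = v := by rw [← hv2, Equiv.apply_symm_apply]
      constructor
      · intro heq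
        rw [heq] at hpk
        rw [← hpk] at hv1
        exact absurd (lt_of_lt_of_le hlt hv1) (lt_irrefl _)
      · simp only [mem_filter, mem_univ, true_and]
        by_contra hky
        push_neg at hky
        have := hk k hky
        rw [hpk] at this
        have := le_antisymm hv1 this
        rw [← hpk] at this
        have : k = y := p.injective this
        rw [this] at hky
        exact absurd hky (lt_irrefl _)
    have hcard := Finset.card_le_card hsub
    rw [Finset.card_image_of_injective _ p.symm.injective, card_univ_le] at hcard
    have hxmem : x ∈ (univ : Finset (Fin n)).filter (fun k : Fin n => k ≤ y) := by
      simp only [mem_filter, mem_univ, true_and]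
      exact le_of_lt hxy
    rw [Finset.card_erase_of_mem hxmem, card_univ_le] at hcard
    have h1 : (y : ℕ) < (p y : ℕ) := hy
    omega
  obtain ⟨k, hk1, hk2⟩ := hex
  exact hav x y k hxy hk1 ⟨hlt, hk2⟩

/-- 321-avoiding permutations are increasing on non-excedances -/
lemma nonexc_mono (hav : ∀ a b c : Fin n, a < b → b < c → ¬(p b < p a ∧ p c < p b))
    {x y : Fin n} (hx : x ∉ Pp p) (hy : y ∉ Pp p) (hxy : x < y) : p x < p y := by
  rw [mem_Pp] at hx hy
  push_neg at hx hy
  by_contra hle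
  push_neg at hle
  have hne : p y ≠ p x := fun h => absurd (p.injective h) (ne_of_gt hxy)
  have hlt : p y < p x := lt_of_le_of_ne hle hne
  have hex : ∃ k : Fin n, k < x ∧ p x < p k := by
    by_contra hk
    push_neg at hk
    have hsub : ((univ : Finset (Fin n)).filter (fun v : Fin n => ¬ v < p x)).image p.symm ⊆
        ((univ : Finset (Fin n)).filter (fun k : Fin n => ¬ k < x)).erase y := by
      intro k hk2
      obtain ⟨v, hv1, hv2⟩ := Finset.mem_image.1 hk2
      simp only [mem_filter, mem_univ, true_and, not_lt] at hv1
      rw [Finset.mem_erase]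
      have hpk : p k = v := by rw [← hv2, Equiv.apply_symm_apply]
      constructor
      · intro heq
        rw [heq] at hpk
        rw [← hpk] at hv1
        exact absurd (lt_of_lt_of_le hlt hv1) (lt_irrefl _)
      · simp only [mem_filter, mem_univ, true_and, not_lt]
        by_contra hkx
        push_neg at hkx
        have := hk k hkx
        rw [hpk] at this
        have := le_antisymm this hv1
        have : k = x := p.injective (by rw [hpk]; exact this)
        rw [this] at hkx
        exact absurd hkx (lt_irrefl _)
    have hcard := Finset.card_le_card hsub
    rw [Finset.card_image_of_injective _ p.symm.injective] at hcard
    have hA : ((univ : Finset (Fin n)).filter (fun v : Fin n => ¬ v < p x)).card =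
        n - (p x : ℕ) := by
      have h1 := Finset.card_filter_add_card_filter_not
        (s := (univ : Finset (Fin n))) (p := fun v : Fin n => v < p x)
      rw [card_univ_lt, Finset.card_univ, Fintype.card_fin] at h1
      have := (p x).2
      omega
    have hB : ((univ : Finset (Fin n)).filter (fun k : Fin n => ¬ k < x)).card =
        n - (x : ℕ) := by
      have h1 := Finset.card_filter_add_card_filter_not
        (s := (univ : Finset (Fin n))) (p := fun k : Fin n => k < x)
      rw [card_univ_lt, Finset.card_univ, Fintype.card_fin] at h1
      have := x.2
      omega
    have hymem : y ∈ (univ : Finset (Fin n)).filter (fun k : Fin n => ¬ k < x) := by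
      simp only [mem_filter, mem_univ, true_and, not_lt]
      exact le_of_lt hxy
    rw [Finset.card_erase_of_mem hymem, hA, hB] at hcard
    have h1 : (p x : ℕ) ≤ (x : ℕ) := hx
    have h2 : (x : ℕ) < (y : ℕ) := hxy
    have := y.2
    omega
  obtain ⟨k, hk1, hk2⟩ := hex
  exact hav k x y hk1 hxy ⟨hk2, hlt⟩

/-- every 321-avoiding permutation is the fill permutation of its excedance data -/
lemma avoid_eq_fill (hav : ∀ a b c : Fin n, a < b → b < c → ¬(p b < p a ∧ p c < p b)) :
    ∀ x : Fin n, p x = fillFun (Pp p) (Vp p) (hcp p) x := by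
  apply fill_unique
  · intro x y hx hy hxy
    exact exc_mono hav hx hy hxy
  · intro x y hx hy hxy
    exact nonexc_mono hav hx hy hxy
  · intro x hx
    exact Finset.mem_image_of_mem p hx
  · intro x hx hmem
    obtain ⟨x', hx1, hx2⟩ := Finset.mem_image.1 hmem
    rw [p.injective hx2] at hx1
    exact hx hx1


/-! ### Recovery of the data from the kernel partition -/

variable {P V}

lemma ker_rel {f : Fin n → Fin n} {x y : Fin n} : (Setoid.ker f).r x y ↔ f x = f y :=
  Iff.rfl

lemma bmin_ker (x : Fin n) : bmin (Setoid.ker (ff P V)) x = ff P V x := by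
  apply le_antisymm
  · apply Finset.min'_le
    rw [mem_blk, ker_rel, ff_idem]
  · have hmem := Finset.min'_mem (blk (Setoid.ker (ff P V)) x) ⟨x, self_mem_blk _ x⟩
    rw [mem_blk, ker_rel] at hmem
    calc ff P V x = ff P V (bmin (Setoid.ker (ff P V)) x) := hmem
      _ ≤ bmin (Setoid.ker (ff P V)) x := ff_le _ _ _

lemma Pr_ker (dom : Dom P V) (hP1 : ∀ a ∈ P, (a : ℕ) + 1 < n) :
    Pr (Setoid.ker (ff P V)) = P := by
  ext a
  rw [mem_Pr]
  constructor
  · rintro ⟨m, hm1, hm2, hm3⟩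
    rw [bmin_ker] at hm1
    have := ff_open dom m
    rw [hm1] at this
    rcases this with h | ⟨b, hb, hbm⟩
    · exact absurd h hm2
    · have : b = a := Fin.ext (by omega)
      rw [← this]
      exact hb
  · intro ha
    have han : (a : ℕ) + 1 < n := hP1 a ha
    refine ⟨⟨(a : ℕ) + 1, han⟩, ?_, by simp, by simp⟩
    rw [bmin_ker]
    exact open_ff (Or.inr ⟨a, ha, rfl⟩)

lemma Vr_ker (dom : Dom P V) (hcard : P.card = V.card)
    (hP1 : ∀ a ∈ P, (a : ℕ) + 1 < n) :
    Vr (Setoid.ker (ff P V)) = V := by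
  have hsub : Vr (Setoid.ker (ff P V)) ⊆ V := by
    intro v hv
    rw [mem_Vr] at hv
    obtain ⟨hv1, hv2⟩ := hv
    rw [bmin_ker] at hv2
    obtain ⟨c, hc1, hc2, hc3⟩ := exists_close dom hcard hP1 (ff_idem (P := P) (V := V) v) hv2
    have hcblk : c ∈ blk (Setoid.ker (ff P V)) v := by
      rw [mem_blk, ker_rel, hc1]
    have h1 : c ≤ bmax (Setoid.ker (ff P V)) v := Finset.le_max' _ _ hcblk
    rw [hv1] at h1
    have h2 : v ≤ c := hc3 v rfl
    rw [le_antisymm h2 h1]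
    exact hc2
  apply Finset.eq_of_subset_of_card_le hsub
  have h1 := hcr (Setoid.ker (ff P V))
  rw [Pr_ker dom hP1] at h1
  omega

/-- `Setoid`s on `Fin n` are finite (via `bmin`) -/
lemma setoid_inj : Function.Injective (fun s : Setoid (Fin n) => bmin s) := by
  intro s1 s2 h
  have h' : bmin s1 = bmin s2 := h
  apply Setoid.ext
  intro x y
  constructor
  · intro hr
    apply rel_of_bmin_eq s2
    rw [← congrFun h' x, ← congrFun h' y]
    exact bmin_eq_of_rel s1 hr
  · intro hr
    apply rel_of_bmin_eq s1
    rw [congrFun h' x, congrFun h' y]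
    exact bmin_eq_of_rel s2 hr

instance : Finite (Setoid (Fin n)) := Finite.of_injective _ setoid_inj


/-! ### Final assembly -/

lemma NCr_of_isNoncrossing {r : Setoid (Fin n)} (h : IsNoncrossing r) : NCr r := by
  intro a b c d h1 h2 h3 h4 h5
  by_contra h6
  exact h ⟨a, b, c, d, h1, h2, h3, h4, h5, h6⟩

lemma isNoncrossing_ker (dom : Dom P V) : IsNoncrossing (Setoid.ker (ff P V)) := by
  rintro ⟨a, b, c, d, h1, h2, h3, h4, h5, h6⟩
  exact ker_noncrossing dom ⟨a, b, c, d, h1, h2, h3, ker_rel.1 h4, ker_rel.1 h5,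
    fun hh => h6 (ker_rel.2 hh)⟩

def thetaSub (π : {r : Setoid (Fin n) // IsNoncrossing r}) :
    {p : Equiv.Perm (Fin n) // Avoids321 p} :=
  ⟨fillPerm (Pr π.1) (Vr π.1) (hcr π.1),
    fun a b c hab hbc => fill_avoids (Pr π.1) (Vr π.1) (hcr π.1) a b c hab hbc⟩

def phiSub (q : {p : Equiv.Perm (Fin n) // Avoids321 p}) :
    {r : Setoid (Fin n) // IsNoncrossing r} :=
  ⟨Setoid.ker (ff (Pp q.1) (Vp q.1)), isNoncrossing_ker (domp q.1)⟩

lemma fill_Pp {P V : Finset (Fin n)} (dom : Dom P V) (hc : P.card = V.card) :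
    Pp (fillPerm P V hc) = P := by
  ext x
  rw [mem_Pp]
  constructor
  · intro h
    by_contra hx
    have := fill_nonexc P V hc dom hx
    rw [Fin.lt_def] at h
    have h2 : (fillPerm P V hc x : ℕ) = (fillFun P V hc x : ℕ) := rfl
    omega
  · intro hx
    rw [Fin.lt_def]
    exact fill_exc P V hc dom hx

lemma fill_Vp {P V : Finset (Fin n)} (dom : Dom P V) (hc : P.card = V.card) :
    Vp (fillPerm P V hc) = V := by
  have hsub : Vp (fillPerm P V hc) ⊆ V := by
    intro v hv
    unfold Vp at hv
    obtain ⟨x, hx1, hx2⟩ := Finset.mem_image.1 hv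
    rw [fill_Pp dom hc] at hx1
    rw [← hx2]
    exact fill_mem_V P V hc hx1
  apply Finset.eq_of_subset_of_card_le hsub
  rw [← hcp (fillPerm P V hc)]
  unfold Pp
  rw [← hc]
  apply le_of_eq
  congr 1
  have := fill_Pp dom hc
  unfold Pp at this
  rw [this]

lemma fillPerm_congr {P1 V1 P2 V2 : Finset (Fin n)} (hP : P1 = P2) (hV : V1 = V2)
    (h1 : P1.card = V1.card) (h2 : P2.card = V2.card) :
    fillPerm P1 V1 h1 = fillPerm P2 V2 h2 := by
  subst hP; subst hV; rfl

lemma thetaSub_injective :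
    Function.Injective (thetaSub : {r : Setoid (Fin n) // IsNoncrossing r} → _) := by
  intro π1 π2 h
  have h1 : fillPerm (Pr π1.1) (Vr π1.1) (hcr π1.1) =
      fillPerm (Pr π2.1) (Vr π2.1) (hcr π2.1) := congrArg Subtype.val h
  have hP : Pr π1.1 = Pr π2.1 := by
    rw [← fill_Pp (domr π1.1) (hcr π1.1), ← fill_Pp (domr π2.1) (hcr π2.1), h1]
  have hV : Vr π1.1 = Vr π2.1 := by
    rw [← fill_Vp (domr π1.1) (hcr π1.1), ← fill_Vp (domr π2.1) (hcr π2.1), h1]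
  apply Subtype.ext
  apply Setoid.ext
  intro x y
  rw [setoid_eq_ker (NCr_of_isNoncrossing π1.2) x y,
    setoid_eq_ker (NCr_of_isNoncrossing π2.2) x y, hP, hV]

lemma phiSub_injective :
    Function.Injective (phiSub : {p : Equiv.Perm (Fin n) // Avoids321 p} → _) := by
  intro q1 q2 h
  have h1 : Setoid.ker (ff (Pp q1.1) (Vp q1.1)) = Setoid.ker (ff (Pp q2.1) (Vp q2.1)) :=
    congrArg Subtype.val h
  have hP : Pp q1.1 = Pp q2.1 := by
    rw [← Pr_ker (domp q1.1) (hP1p q1.1), ← Pr_ker (domp q2.1) (hP1p q2.1), h1]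
  have hV : Vp q1.1 = Vp q2.1 := by
    rw [← Vr_ker (domp q1.1) (hcp q1.1) (hP1p q1.1),
      ← Vr_ker (domp q2.1) (hcp q2.1) (hP1p q2.1), h1]
  apply Subtype.ext
  have e1 : q1.1 = fillPerm (Pp q1.1) (Vp q1.1) (hcp q1.1) :=
    Equiv.ext (avoid_eq_fill q1.2)
  have e2 : q2.1 = fillPerm (Pp q2.1) (Vp q2.1) (hcp q2.1) :=
    Equiv.ext (avoid_eq_fill q2.2)
  rw [e1, e2]
  exact fillPerm_congr hP hV _ _

lemma thetaSub_bijective :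
    Function.Bijective (thetaSub : {r : Setoid (Fin n) // IsNoncrossing r} → _) :=
  Function.Injective.bijective_of_nat_card_le thetaSub_injective
    (Nat.card_le_card_of_injective phiSub phiSub_injective)

/-- number of blocks -/
lemma quot_card (r : Setoid (Fin n)) (hn : 1 ≤ n) :
    Nat.card (Quotient r) = (minsNZ r).card + 1 := by
  have hequiv : Quotient r ≃ {x : Fin n // bmin r x = x} := by
    refine ⟨Quotient.lift (fun x => (⟨bmin r x, bmin_idem r x⟩ : {x : Fin n // bmin r x = x}))
      (fun a b hab => Subtype.ext (bmin_eq_of_rel r hab)), fun e => ⟦e.1⟧, ?_, ?_⟩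
    · intro q
      induction q using Quotient.ind with
      | _ x => exact Quotient.sound (r.symm (bmin_rel r x))
    · rintro ⟨x, hx⟩
      exact Subtype.ext (by simpa using hx)
  rw [Nat.card_congr hequiv, Nat.card_eq_fintype_card, Fintype.card_subtype]
  set z0 : Fin n := ⟨0, hn⟩ with hz0
  have hbz0 : bmin r z0 = z0 := by
    apply le_antisymm (bmin_le r z0)
    rw [Fin.le_def]
    exact Nat.zero_le _
  have hsplit := Finset.card_filter_add_card_filter_not
    (s := (univ : Finset (Fin n)).filter (fun x : Fin n => bmin r x = x))
    (p := fun x : Fin n => (x : ℕ) ≠ 0)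
  have hminsNZ : ((univ : Finset (Fin n)).filter (fun x : Fin n => bmin r x = x)).filter
      (fun x : Fin n => (x : ℕ) ≠ 0) = minsNZ r := by
    unfold minsNZ
    rw [Finset.filter_filter]
  have hz0f : ((univ : Finset (Fin n)).filter (fun x : Fin n => bmin r x = x)).filter
      (fun x : Fin n => ¬ (x : ℕ) ≠ 0) = {z0} := by
    ext x
    simp only [Finset.mem_filter, Finset.mem_univ, true_and, Finset.mem_singleton,
      not_not]
    constructor
    · rintro ⟨_, hx2⟩
      exact Fin.ext (by simpa using hx2)
    · rintro rfl
      exact ⟨hbz0, rfl⟩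
  rw [hminsNZ, hz0f, Finset.card_singleton] at hsplit
  omega


lemma minprop_iff (r : Setoid (Fin n)) (e : Fin n) :
    (∀ j, r.r e j → e ≤ j) ↔ bmin r e = e :=
  ⟨fun h => le_antisymm (bmin_le r e) (h _ (bmin_rel r e)),
   fun h j hj => by rw [← h]; exact bmin_le_of_rel r hj⟩

end
end NC321

open NC321

/-- There is a bijection `θ` from noncrossing partitions of `[n]` onto
321-avoiding permutations of `[n]` such that `Exc (θ π)` is exactly
`{m - 1 : m a block minimum of π, m ≠ 1}` (an element `e : Fin n` represents
`m = e + 1 ∈ [n]`, so `m - 1 = (e : ℕ)` and `m ≠ 1` is `e ≠ 0`); in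
particular the number of excedences of `θ π` is one less than the number of
blocks of `π`. -/
theorem stmt11 (n : ℕ) (hn : 1 ≤ n) :
    ∃ θ : {r : Setoid (Fin n) // IsNoncrossing r} ≃
          {p : Equiv.Perm (Fin n) // Avoids321 p},
      ∀ π : {r : Setoid (Fin n) // IsNoncrossing r},
        Exc (θ π).1 =
          {m | ∃ e : Fin n, (e : ℕ) = m ∧ (e : ℕ) ≠ 0 ∧ ∀ j, π.1.r e j → e ≤ j} ∧
        Nat.card (Quotient π.1) = (Exc (θ π).1).ncard + 1 := by
  classical
  refine ⟨Equiv.ofBijective thetaSub thetaSub_bijective, ?_⟩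
  intro π
  have hp : (Equiv.ofBijective thetaSub thetaSub_bijective π).1 =
      fillPerm (Pr π.1) (Vr π.1) (hcr π.1) := rfl
  have hExc : Exc (Equiv.ofBijective thetaSub thetaSub_bijective π).1 =
      {m | ∃ e : Fin n, (e : ℕ) = m ∧ (e : ℕ) ≠ 0 ∧ ∀ j, π.1.r e j → e ≤ j} := by
    rw [hp]
    ext i
    simp only [Exc, Set.mem_setOf_eq]
    constructor
    · rintro ⟨⟨h1, h2⟩, hlt⟩
      set x : Fin n := ⟨i - 1, Nat.lt_of_lt_of_le (Nat.sub_lt h1 Nat.one_pos) h2⟩ with hx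
      have hxP : x ∈ Pr π.1 := by
        by_contra hxc
        have := fill_nonexc (Pr π.1) (Vr π.1) (hcr π.1) (domr π.1) hxc
        have h3 : (fillPerm (Pr π.1) (Vr π.1) (hcr π.1) x : ℕ) =
            (fillFun (Pr π.1) (Vr π.1) (hcr π.1) x : ℕ) := rfl
        have h4 : (x : ℕ) = i - 1 := rfl
        omega
      obtain ⟨m, hm1, hm2, hm3⟩ := (mem_Pr π.1).1 hxP
      refine ⟨m, ?_, hm2, ?_⟩
      · have h4 : (x : ℕ) = i - 1 := rfl
        omega
      · intro j hj
        have := bmin_le_of_rel π.1 hj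
        rw [hm1] at this
        exact this
    · rintro ⟨e, he1, he2, he3⟩
      have hmin : bmin π.1 e = e := (minprop_iff π.1 e).1 he3
      have haP : predF e ∈ Pr π.1 := by
        rw [mem_Pr]
        refine ⟨e, hmin, he2, ?_⟩
        simp only [predF]
        omega
      have h1 : 1 ≤ i := by omega
      have h2 : i ≤ n := by have := e.2; omega
      refine ⟨⟨h1, h2⟩, ?_⟩
      have hxe : (⟨i - 1, Nat.lt_of_lt_of_le (Nat.sub_lt h1 Nat.one_pos) h2⟩ : Fin n) =
          predF e := by
        apply Fin.ext
        simp only [predF]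
        omega
      rw [hxe]
      have := fill_exc (Pr π.1) (Vr π.1) (hcr π.1) (domr π.1) haP
      have h4 : ((predF e) : ℕ) = i - 1 := by simp only [predF]; omega
      have h3 : (fillPerm (Pr π.1) (Vr π.1) (hcr π.1) (predF e) : ℕ) =
          (fillFun (Pr π.1) (Vr π.1) (hcr π.1) (predF e) : ℕ) := rfl
      omega
  refine ⟨hExc, ?_⟩
  rw [hExc]
  have hset : {m | ∃ e : Fin n, (e : ℕ) = m ∧ (e : ℕ) ≠ 0 ∧ ∀ j, π.1.r e j → e ≤ j} =
      Fin.val '' (↑(minsNZ π.1) : Set (Fin n)) := by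
    ext m
    simp only [Set.mem_setOf_eq, Set.mem_image, Finset.coe_filter, minsNZ,
      Set.mem_setOf_eq, Finset.mem_univ, true_and, Finset.mem_coe, Finset.mem_filter]
    constructor
    · rintro ⟨e, he1, he2, he3⟩
      exact ⟨e, ⟨(minprop_iff π.1 e).1 he3, he2⟩, he1⟩
    · rintro ⟨e, ⟨hee, he2⟩, he1⟩
      exact ⟨e, he1, he2, (minprop_iff π.1 e).2 hee⟩
  rw [hset, Set.ncard_image_of_injective _ Fin.val_injective, Set.ncard_coe_finset]
  exact quot_card π.1 hn
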